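/- arXiv:2503.13519 — 3 statements merged into one kernel-verified Lean document; each statement's English description precedes it below -/
import Mathlib

section
/- Every RC-lattice (a finite lattice in which all reducible elements are pairwise comparable) is a dismantlable lattice. -/
open Finset

section Prelim
variable {α : Type*}

/-- An element is join-reducible if it is the join of two elements distinct from it. -/
def JoinReducible [Lattice α] (x : α) : Prop := ∃ y z, y ≠ x ∧ z ≠ x ∧ y ⊔ z = x

/-- An element is meet-reducible if it is the meet of two elements distinct from it. -/
def MeetReducible [Lattice α] (x : α) : Prop := ∃ y z, y ≠ x ∧ z ≠ x ∧ y ⊓ z = x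

/-- An element of a lattice is reducible if it is join- or meet-reducible. -/
def LatReducible [Lattice α] (x : α) : Prop := JoinReducible x ∨ MeetReducible x

/-- An RC-lattice: all reducible elements are pairwise comparable. -/
def IsRCLattice (α : Type*) [Lattice α] : Prop :=
  ∀ x y : α, LatReducible x → LatReducible y → x ≤ y ∨ y ≤ x

/-- A finite lattice is dismantlable if there is a strictly increasing chain of sublattices
with `|L_i| = i`, ending at the whole lattice. -/
def Dismantlable (α : Type*) [Lattice α] [Fintype α] : Prop :=
  ∃ f : Fin (Fintype.card α) → Sublattice α,
    StrictMono f ∧ ∀ i : Fin (Fintype.card α), ((f i : Set α)).ncard = (i : ℕ) + 1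

/-- The cover (Hasse) graph of a partial order. -/
def coverGraph (α : Type*) [PartialOrder α] : SimpleGraph α where
  Adj x y := x ⋖ y ∨ y ⋖ x
  symm := ⟨fun _ _ h => Or.symm h⟩
  loopless := ⟨fun x h => by rcases h with h | h <;> exact h.ne rfl⟩

/-- The nullity (cycle rank) of the cover graph of a poset:
(number of covering edges) − (number of elements) + (number of connected components). -/
noncomputable def nullity (α : Type*) [PartialOrder α] : ℕ :=
  Nat.card (coverGraph α).edgeSet + Nat.card ((coverGraph α).ConnectedComponent) - Nat.card α

/-- An adjunct representation of a lattice as chains `C 0, …, C k`, where for `i ≠ 0`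
the chain `C i` is attached strictly between `a i < b i` (with `a i` not covered by `b i`),
lying in an earlier chain. -/
def IsAdjunctRep (α : Type*) [Lattice α] (k : ℕ) (C : Fin (k + 1) → Set α)
    (a b : Fin (k + 1) → α) : Prop :=
  (∀ i, IsChain (· ≤ ·) (C i)) ∧
  (∀ i, (C i).Nonempty) ∧
  (⋃ i, C i) = Set.univ ∧
  (Pairwise fun i j => Disjoint (C i) (C j)) ∧
  ∀ i : Fin (k + 1), i ≠ 0 →
    a i < b i ∧ ¬ (a i ⋖ b i) ∧
    (∃ j, j < i ∧ a i ∈ C j) ∧ (∃ j, j < i ∧ b i ∈ C j) ∧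
    (∀ x ∈ C i, ∀ y, y ∉ C i → ((x ≤ y ↔ b i ≤ y) ∧ (y ≤ x ↔ y ≤ a i)))

/-- A lattice is an adjunct of `k+1` chains. -/
def IsAdjunctOfChains (α : Type*) [Lattice α] (k : ℕ) : Prop :=
  ∃ C a b, IsAdjunctRep α k C a b

/-- A poset element is reducible if it has at least two lower covers or at least two upper
covers. -/
def PReducible [PartialOrder α] (x : α) : Prop :=
  (∃ y z, y ≠ z ∧ y ⋖ x ∧ z ⋖ x) ∨ (∃ y z, y ≠ z ∧ x ⋖ y ∧ x ⋖ z)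

/-- An element is doubly irreducible within the induced subposet on `S`:
at most one lower cover and at most one upper cover. -/
def DoublyIrrOn [PartialOrder α] (S : Set α) (x : ↥S) : Prop :=
  {y : ↥S | y ⋖ x}.Subsingleton ∧ {y : ↥S | x ⋖ y}.Subsingleton

/-- One step of the basic-retract process: remove a doubly irreducible element whose
removal preserves nullity. -/
def RetractStep [PartialOrder α] (S T : Set α) : Prop :=
  ∃ (x : α) (hx : x ∈ S), T = S \ {x} ∧ DoublyIrrOn S ⟨x, hx⟩ ∧ nullity ↥T = nullity ↥S

/-- One step of the pendant-vertex removal process: remove an element having exactly one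
neighbour in the cover graph of the induced subposet. -/
def PendantStep [PartialOrder α] (S T : Set α) : Prop :=
  ∃ (x : α) (hx : x ∈ S), T = S \ {x} ∧
    ({y : ↥S | y ⋖ (⟨x, hx⟩ : ↥S) ∨ (⟨x, hx⟩ : ↥S) ⋖ y}).ncard = 1

/-- `R` is the basic retract of the whole poset. -/
def IsBasicRetract (α : Type*) [PartialOrder α] (R : Set α) : Prop :=
  Relation.ReflTransGen (RetractStep (α := α)) Set.univ R ∧ ∀ T, ¬ RetractStep R T

/-- `B` is the basic block associated to the poset: obtained from the basic retract by
successive removal of all pendant vertices. -/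
def IsBasicBlockAssoc (α : Type*) [PartialOrder α] (B : Set α) : Prop :=
  ∃ R, IsBasicRetract α R ∧ Relation.ReflTransGen (PendantStep (α := α)) R B ∧
    ∀ T, ¬ PendantStep B T

end Prelim

/-- The order relation of an explicit lattice structure on `Fin n`. -/
def lle {n : ℕ} (L : Lattice (Fin n)) (x y : Fin n) : Prop :=
  letI := L; x ≤ y

/-- Isomorphism of explicit lattice structures on `Fin m` and `Fin n`. -/
def latIso {m n : ℕ} (L : Lattice (Fin m)) (M : Lattice (Fin n)) : Prop :=
  ∃ e : Fin m ≃ Fin n, ∀ x y, lle L x y ↔ lle M (e x) (e y)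

/-- The number of isomorphism classes of lattices on `Fin n` satisfying `P`. -/
noncomputable def isoCount {n : ℕ} (P : Lattice (Fin n) → Prop) : ℕ :=
  Nat.card (Quot (fun L M : {L : Lattice (Fin n) // P L} => latIso L.1 M.1))

/-- The class of RC-lattices on `n` elements with exactly `r` reducible elements and
nullity `k`. -/
def LClass (n r k : ℕ) : Lattice (Fin n) → Prop := fun L =>
  letI := L
  IsRCLattice (Fin n) ∧ Nat.card {x : Fin n // LatReducible x} = r ∧ nullity (Fin n) = k

/-- The class of (maximal) blocks on `n` elements with exactly `r` comparable reducible
elements and nullity `k`: both the least and the greatest element are reducible. -/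
def BlockClass (n r k : ℕ) : Lattice (Fin n) → Prop := fun L =>
  LClass n r k L ∧
    (letI := L
     (∃ x : Fin n, IsBot x ∧ LatReducible x) ∧ (∃ x : Fin n, IsTop x ∧ LatReducible x))

/-- `partCount m t` is the number of partitions of `m` into exactly `t` positive parts. -/
noncomputable def partCount (m t : ℕ) : ℕ :=
  Nat.card {c : Multiset ℕ // Multiset.card c = t ∧ (∀ x ∈ c, 0 < x) ∧ c.sum = m}

/-- `L` is a linear (ordinal) sum of `L₁` and `L₂`. -/
def IsLinearSumOf {n p q : ℕ} (L : Lattice (Fin n)) (L₁ : Lattice (Fin p))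
    (L₂ : Lattice (Fin q)) : Prop :=
  ∃ (e₁ : Fin p → Fin n) (e₂ : Fin q → Fin n),
    Function.Injective e₁ ∧ Function.Injective e₂ ∧
    (∀ x, (∃ a, e₁ a = x) ∨ ∃ b, e₂ b = x) ∧
    (∀ a b, e₁ a ≠ e₂ b) ∧
    (∀ a a', lle L₁ a a' ↔ lle L (e₁ a) (e₁ a')) ∧
    (∀ b b', lle L₂ b b' ↔ lle L (e₂ b) (e₂ b')) ∧
    (∀ a b, lle L (e₁ a) (e₂ b))

/-- `L` is a vertical sum of `L₁` and `L₂`: the top of `L₁` is identified with the bottom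
of `L₂`. -/
def IsVerticalSumOf {n p q : ℕ} (L : Lattice (Fin n)) (L₁ : Lattice (Fin p))
    (L₂ : Lattice (Fin q)) : Prop :=
  ∃ (e₁ : Fin p → Fin n) (e₂ : Fin q → Fin n) (t₁ : Fin p) (b₂ : Fin q),
    (∀ a, lle L₁ a t₁) ∧ (∀ b, lle L₂ b₂ b) ∧
    Function.Injective e₁ ∧ Function.Injective e₂ ∧
    (∀ x, (∃ a, e₁ a = x) ∨ ∃ b, e₂ b = x) ∧
    e₁ t₁ = e₂ b₂ ∧
    (∀ a b, e₁ a = e₂ b → a = t₁ ∧ b = b₂) ∧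
    (∀ a a', lle L₁ a a' ↔ lle L (e₁ a) (e₁ a')) ∧
    (∀ b b', lle L₂ b b' ↔ lle L (e₂ b) (e₂ b')) ∧
    (∀ a b, lle L (e₁ a) (e₂ b))

/-- The order of the basic block `B₆` on elements `0̂=0, a=1, b=2, c=3, 1̂=4, c₁=5, c₂=6, c₃=7`:
the chain `0̂ ≺ a ≺ b ≺ c ≺ 1̂` with `c₁` adjoined between `0̂` and `c`, `c₂` between `a`
and `1̂`, and `c₃` between `b` and `1̂`. -/
def b6le (x y : Fin 8) : Bool :=
  x == y || x == 0 ||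
  (x == 1 && (y == 2 || y == 3 || y == 4 || y == 6 || y == 7)) ||
  (x == 2 && (y == 3 || y == 4 || y == 7)) ||
  (x == 3 && y == 4) ||
  (x == 5 && (y == 3 || y == 4)) ||
  (x == 6 && y == 4) ||
  (x == 7 && y == 4)

lemma b6_refl : ∀ a : Fin 8, b6le a a = true := by decide
lemma b6_trans : ∀ a b c : Fin 8, b6le a b = true → b6le b c = true → b6le a c = true := by
  decide
lemma b6_antisymm : ∀ a b : Fin 8, b6le a b = true → b6le b a = true → a = b := by decide

/-- The basic block `B₆` as a poset. -/
def B6 : Type := Fin 8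

instance : PartialOrder B6 where
  le x y := b6le x y = true
  le_refl := b6_refl
  le_trans := b6_trans
  le_antisymm := b6_antisymm

/-- The order of the basic block `B₈` on elements
`0̂=0, a=1, b=2, c=3, x=4, 1̂=5, c₁=6, c₂=7, c₃=8`:
the chain `0̂ ≺ a ≺ b ≺ c ≺ x ≺ 1̂` with `c₁` adjoined between `0̂` and `b`, `c₂` between `a`
and `c`, and `c₃` between `c` and `1̂`. -/
def b8le (x y : Fin 9) : Bool :=
  x == y || x == 0 ||
  (x == 1 && (y == 2 || y == 3 || y == 4 || y == 5 || y == 7 || y == 8)) ||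
  (x == 2 && (y == 3 || y == 4 || y == 5 || y == 8)) ||
  (x == 3 && (y == 4 || y == 5 || y == 8)) ||
  (x == 4 && y == 5) ||
  (x == 6 && (y == 2 || y == 3 || y == 4 || y == 5 || y == 8)) ||
  (x == 7 && (y == 3 || y == 4 || y == 5 || y == 8)) ||
  (x == 8 && y == 5)

lemma b8_refl : ∀ a : Fin 9, b8le a a = true := by decide
lemma b8_trans : ∀ a b c : Fin 9, b8le a b = true → b8le b c = true → b8le a c = true := by
  decide
lemma b8_antisymm : ∀ a b : Fin 9, b8le a b = true → b8le b a = true → a = b := by decide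

/-- The basic block `B₈` as a poset. -/
def B8 : Type := Fin 9

instance : PartialOrder B8 where
  le x y := b8le x y = true
  le_refl := b8_refl
  le_trans := b8_trans
  le_antisymm := b8_antisymm

/-!
Removing an element that is neither join- nor meet-reducible from a lattice leaves a sublattice,
and every sublattice of an RC-lattice is again an RC-lattice, since reducibility in a sublattice
implies reducibility in the ambient lattice. An RC-lattice always has such a doubly irreducible
element: a reducible `x = y ⊔ z` (or `y ⊓ z`) with `y, z ≠ x` reducible is impossible when `y`
and `z` are comparable. Removing doubly irreducible elements one at a time therefore dismantles
the lattice.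
-/

section DoublyIrreducible
variable {α : Type*} [Lattice α] {x : α}

lemma supClosed_compl_singleton (hx : ¬ JoinReducible x) : SupClosed ({x}ᶜ : Set α) :=
  fun a ha b hb hab => hx ⟨a, b, ha, hb, hab⟩

lemma infClosed_compl_singleton (hx : ¬ MeetReducible x) : InfClosed ({x}ᶜ : Set α) :=
  fun a ha b hb hab => hx ⟨a, b, ha, hb, hab⟩

def Sublattice.complSingleton (hx : ¬ LatReducible x) : Sublattice α where
  carrier := {x}ᶜ
  supClosed' := supClosed_compl_singleton (hx ∘ Or.inl)
  infClosed' := infClosed_compl_singleton (hx ∘ Or.inr)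

@[simp]
lemma Sublattice.coe_complSingleton (hx : ¬ LatReducible x) :
    (Sublattice.complSingleton hx : Set α) = {x}ᶜ := rfl

lemma Sublattice.card_complSingleton [Finite α] (hx : ¬ LatReducible x) :
    Nat.card (Sublattice.complSingleton hx) = Nat.card α - 1 := by
  rw [← SetLike.coe_sort_coe, Nat.card_coe_set_eq, coe_complSingleton, Set.ncard_compl,
    Set.ncard_singleton]

end DoublyIrreducible

section RCLattice
variable {α : Type*} [Lattice α]

lemma LatReducible.coe {S : Sublattice α} {x : S} (hx : LatReducible x) :
    LatReducible (x : α) := by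
  rcases hx with ⟨y, z, hy, hz, hyz⟩ | ⟨y, z, hy, hz, hyz⟩
  · exact Or.inl ⟨y, z, Subtype.coe_injective.ne hy, Subtype.coe_injective.ne hz,
      congrArg Subtype.val hyz⟩
  · exact Or.inr ⟨y, z, Subtype.coe_injective.ne hy, Subtype.coe_injective.ne hz,
      congrArg Subtype.val hyz⟩

lemma IsRCLattice.sublattice (h : IsRCLattice α) (S : Sublattice α) : IsRCLattice S :=
  fun x y hx hy => h x y hx.coe hy.coe

lemma IsRCLattice.exists_not_latReducible [Nonempty α] (h : IsRCLattice α) :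
    ∃ x : α, ¬ LatReducible x := by
  by_contra! hall
  obtain ⟨x⟩ := ‹Nonempty α›
  rcases hall x with ⟨y, z, hy, hz, rfl⟩ | ⟨y, z, hy, hz, rfl⟩
  · rcases h y z (hall y) (hall z) with hle | hle
    · exact hz (sup_eq_right.2 hle).symm
    · exact hy (sup_eq_left.2 hle).symm
  · rcases h y z (hall y) (hall z) with hle | hle
    · exact hy (inf_eq_left.2 hle).symm
    · exact hz (inf_eq_right.2 hle).symm

end RCLattice

section Dismantlable
variable {α : Type*} [Lattice α] [Fintype α]

lemma Dismantlable.of_card_eq_zero (hα : Fintype.card α = 0) : Dismantlable α :=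
  ⟨fun i => (i.cast hα).elim0, fun i => (i.cast hα).elim0, fun i => (i.cast hα).elim0⟩

lemma Dismantlable.of_sublattice (S : Sublattice α) [Fintype S]
    (hS : Fintype.card α = Fintype.card S + 1) (hd : Dismantlable S) : Dismantlable α := by
  obtain ⟨f, hf, hf_card⟩ := hd
  let g : Fin (Fintype.card S + 1) → Sublattice α :=
    Fin.lastCases ⊤ fun i => (f i).map S.subtype
  have hg_card : ∀ i, (g i : Set α).ncard = i + 1 := by
    refine Fin.lastCases ?_ fun i => ?_
    · simp [g, Set.ncard_univ, hS]
    · simp [g, Set.ncard_image_of_injective _ Subtype.val_injective, hf_card]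
  have hg_mono : Monotone g := by
    intro i j hij
    induction j using Fin.lastCases with
    | last => simp [g]
    | cast j =>
      induction i using Fin.lastCases with
      | last => exact absurd hij (Fin.castSucc_lt_last j).not_ge
      | cast i => simpa [g] using Sublattice.map_mono (hf.monotone (by simpa using hij))
  have hg : StrictMono g := fun i j hij =>
    (hg_mono hij.le).lt_of_ne fun hij' => by
      have := congrArg (fun T : Sublattice α => (T : Set α).ncard) hij'
      simp only [hg_card] at this
      omega
  exact ⟨g ∘ Fin.cast hS, hg.comp (Fin.cast_strictMono hS), fun i => by simp [hg_card]⟩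

end Dismantlable

/-- Every RC-lattice is a dismantlable lattice. -/
theorem rcLattice_dismantlable (α : Type*) [Lattice α] [Fintype α]
    (h : IsRCLattice α) : Dismantlable α := by
  induction hn : Fintype.card α generalizing α with
  | zero => exact Dismantlable.of_card_eq_zero hn
  | succ n ih =>
    classical
    have : Nonempty α := Fintype.card_pos_iff.1 (by omega)
    obtain ⟨x, hx⟩ := h.exists_not_latReducible
    let S := Sublattice.complSingleton hx
    have hS : Fintype.card S = n := by
      simpa [Nat.card_eq_fintype_card, hn] using Sublattice.card_complSingleton hx
    exact Dismantlable.of_sublattice S (by omega) (ih S (h.sublattice S) hS)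
end

section
/- If L is a dismantlable lattice of nullity k with exactly r reducible elements, then 2 ≤ r ≤ 2k. -/
open Finset

/-! The cover graph of a finite lattice `L` is connected, so its nullity is `k = |E| - |L| + 1`.
Every element but `0` has a lower cover and every element but `1` an upper cover, while a
join-reducible element has two lower covers and a meet-reducible one two upper covers; summing
degrees gives `2 |E| ≥ 2 (|L| - 1) + r`, that is `r ≤ 2 k`. A chain has only `|L| - 1` covers,
so for `k ≥ 1` there are incomparable `x, y`, and `x ⊓ y ≠ x ⊔ y` are reducible. -/

section Reducible

variable {α : Type*} [Lattice α]

theorem JoinReducible.ne_bot [OrderBot α] {x : α} (hx : JoinReducible x) : x ≠ ⊥ := by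
  rintro rfl
  obtain ⟨y, _, hy, -, hyz⟩ := hx
  exact hy (le_bot_iff.1 (hyz ▸ le_sup_left))

theorem two_le_card_reducible_of_not_le_of_not_le [Finite α] {x y : α}
    (hxy : ¬ x ≤ y) (hyx : ¬ y ≤ x) : 2 ≤ Nat.card {z : α // LatReducible z} := by
  have hmeet : MeetReducible (x ⊓ y) :=
    ⟨x, y, fun h => hxy (inf_eq_left.1 h.symm), fun h => hyx (inf_eq_right.1 h.symm), rfl⟩
  have hjoin : JoinReducible (x ⊔ y) :=
    ⟨x, y, fun h => hyx (sup_eq_left.1 h.symm), fun h => hxy (sup_eq_right.1 h.symm), rfl⟩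
  have hne : x ⊓ y ≠ x ⊔ y := fun h => hxy (le_sup_left.trans (h ▸ inf_le_right))
  have : Nontrivial {z : α // LatReducible z} :=
    ⟨⟨⟨_, Or.inr hmeet⟩, ⟨_, Or.inl hjoin⟩, fun h => hne (congrArg Subtype.val h)⟩⟩
  exact Finite.one_lt_card_iff_nontrivial.2 this

end Reducible

section CoverGraph

variable {α : Type*}

theorem coverGraph_reachable_of_le [PartialOrder α] [Finite α] {a b : α} (hab : a ≤ b) :
    (coverGraph α).Reachable a b := by
  induction a using WellFoundedGT.induction with
  | _ a ih =>
    rcases hab.eq_or_lt with rfl | hlt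
    · rfl
    · obtain ⟨c, hac, hcb⟩ := exists_covBy_le_of_lt hlt
      exact (SimpleGraph.Adj.reachable (Or.inl hac)).trans (ih c hac.lt hcb)

theorem coverGraph_preconnected [PartialOrder α] [OrderBot α] [Finite α] :
    (coverGraph α).Preconnected := fun _ _ =>
  (coverGraph_reachable_of_le bot_le).symm.trans (coverGraph_reachable_of_le bot_le)

theorem nullity_of_isEmpty [PartialOrder α] [IsEmpty α] : nullity α = 0 := by
  simp [nullity]

theorem nullity_eq_card_edgeSet_add_one_sub_card [PartialOrder α] [OrderBot α] [Finite α] :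
    nullity α = Nat.card (coverGraph α).edgeSet + 1 - Nat.card α := by
  have hcomp : Nat.card (coverGraph α).ConnectedComponent = 1 :=
    Nat.card_eq_one_iff_unique.2 ⟨coverGraph_preconnected.subsingleton_connectedComponent,
      ⟨(coverGraph α).connectedComponentMk ⊥⟩⟩
  rw [nullity, hcomp]

end CoverGraph

section Degree

open scoped Classical

variable {α : Type*} [Fintype α]

theorem degree_coverGraph [PartialOrder α] (x : α) :
    (coverGraph α).degree x = #{y | y ⋖ x} + #{y | x ⋖ y} := by
  rw [← card_union_of_disjoint]
  · rw [← SimpleGraph.card_neighborFinset_eq_degree]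
    congr 1
    ext y
    simp only [SimpleGraph.mem_neighborFinset, mem_union, mem_filter, mem_univ, true_and]
    exact Or.comm
  · exact disjoint_filter.2 fun y _ hyx hxy => hyx.lt.asymm hxy.lt

theorem two_mul_card_edgeSet [PartialOrder α] :
    2 * Nat.card (coverGraph α).edgeSet = ∑ x : α, #{y | y ⋖ x} + ∑ x : α, #{y | x ⋖ y} := by
  simp_rw [← sum_add_distrib, ← degree_coverGraph, SimpleGraph.sum_degrees_eq_twice_card_edges,
    SimpleGraph.edgeFinset_card, Nat.card_eq_fintype_card]

theorem one_le_card_lowerCovers [PartialOrder α] [OrderBot α] {x : α} (hx : x ≠ ⊥) :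
    1 ≤ #{y | y ⋖ x} := by
  obtain ⟨c, -, hc⟩ := exists_le_covBy_of_lt (bot_lt_iff_ne_bot.2 hx)
  exact card_pos.2 ⟨c, by simpa using hc⟩

theorem JoinReducible.two_le_card_lowerCovers [Lattice α] {x : α} (hx : JoinReducible x) :
    2 ≤ #{y | y ⋖ x} := by
  obtain ⟨y, z, hy, hz, rfl⟩ := hx
  obtain ⟨c, hyc, hc⟩ := exists_le_covBy_of_lt (lt_of_le_of_ne le_sup_left hy)
  obtain ⟨d, hzd, hd⟩ := exists_le_covBy_of_lt (lt_of_le_of_ne le_sup_right hz)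
  have hcd : c ≠ d := by
    rintro rfl
    exact hc.lt.not_ge (sup_le hyc hzd)
  exact one_lt_card.2 ⟨c, by simpa using hc, d, by simpa using hd, hcd⟩

theorem sum_ite_ne_eq_card_sub_one (a : α) :
    ∑ x : α, (if x = a then 0 else 1) = Fintype.card α - 1 := by
  simp [sum_ite, filter_ne', card_erase_of_mem]

theorem card_sub_one_add_card_joinReducible_le [Lattice α] [OrderBot α] :
    Fintype.card α - 1 + #{x : α | JoinReducible x} ≤ ∑ x : α, #{y | y ⋖ x} := by
  rw [← sum_ite_ne_eq_card_sub_one ⊥, card_filter, ← sum_add_distrib]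
  refine sum_le_sum fun x _ => ?_
  by_cases hx : JoinReducible x
  · simpa [hx, hx.ne_bot] using hx.two_le_card_lowerCovers
  · by_cases hbot : x = ⊥
    · subst hbot
      simp [hx]
    · simpa [hx, hbot] using one_le_card_lowerCovers hbot

theorem sum_card_lowerCovers_orderDual [PartialOrder α] :
    ∑ x : αᵒᵈ, #{y | y ⋖ x} = ∑ x : α, #{y | x ⋖ y} :=
  Fintype.sum_equiv OrderDual.ofDual _ _ fun x => by
    rw [← card_map OrderDual.ofDual.toEmbedding]
    congr 1
    ext y
    simpa using toDual_covBy_toDual_iff (a := OrderDual.ofDual x)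

theorem card_sub_one_add_card_meetReducible_le [Lattice α] [OrderTop α] :
    Fintype.card α - 1 + #{x : α | MeetReducible x} ≤ ∑ x : α, #{y | x ⋖ y} :=
  sum_card_lowerCovers_orderDual (α := α) ▸ card_sub_one_add_card_joinReducible_le (α := αᵒᵈ)

theorem sum_card_lowerCovers_le_of_total [PartialOrder α] [OrderBot α]
    (h : ∀ x y : α, x ≤ y ∨ y ≤ x) : ∑ x : α, #{y | y ⋖ x} ≤ Fintype.card α - 1 := by
  rw [← sum_ite_ne_eq_card_sub_one ⊥]
  refine sum_le_sum fun x _ => ?_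
  split_ifs with hx
  · subst hx
    exact (card_eq_zero.2 (filter_eq_empty_iff.2 fun y _ hy => not_lt_bot hy.lt)).le
  · refine card_le_one.2 fun a ha b hb => ?_
    simp only [mem_filter, mem_univ, true_and] at ha hb
    rcases h a b with hab | hba
    · exact ((ha.wcovBy.eq_or_eq hab hb.le).resolve_right hb.ne).symm
    · exact (hb.wcovBy.eq_or_eq hba ha.le).resolve_right ha.ne

theorem nullity_eq_zero_of_total [Lattice α] (h : ∀ x y : α, x ≤ y ∨ y ≤ x) : nullity α = 0 := by
  cases isEmpty_or_nonempty α
  · exact nullity_of_isEmpty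
  have : BoundedOrder α := Fintype.toBoundedOrder α
  have hlower := sum_card_lowerCovers_le_of_total h
  have hupper : ∑ x : α, #{y | x ⋖ y} ≤ Fintype.card α - 1 :=
    sum_card_lowerCovers_orderDual (α := α) ▸
      sum_card_lowerCovers_le_of_total (α := αᵒᵈ) fun x y => h y x
  have hedges := two_mul_card_edgeSet (α := α)
  rw [nullity_eq_card_edgeSet_add_one_sub_card, Nat.card_eq_fintype_card (α := α)]
  have := Fintype.card_pos (α := α)
  omega

theorem card_reducible_le_two_mul_nullity [Lattice α] :
    Nat.card {x : α // LatReducible x} ≤ 2 * nullity α := by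
  cases isEmpty_or_nonempty α
  · simp
  have : BoundedOrder α := Fintype.toBoundedOrder α
  have hjoin := card_sub_one_add_card_joinReducible_le (α := α)
  have hmeet := card_sub_one_add_card_meetReducible_le (α := α)
  have hred : Nat.card {x : α // LatReducible x} ≤
      #{x : α | JoinReducible x} + #{x : α | MeetReducible x} := by
    rw [Nat.card_eq_fintype_card, Fintype.card_subtype]
    refine (card_le_card fun x hx => ?_).trans (card_union_le _ _)
    simp only [mem_filter, mem_union, mem_univ, true_and] at hx ⊢
    exact hx
  have hedges := two_mul_card_edgeSet (α := α)
  rw [nullity_eq_card_edgeSet_add_one_sub_card, Nat.card_eq_fintype_card (α := α)]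
  omega

end Degree

theorem dismantlable_reducible_bounds_general (α : Type*) [Lattice α] [Fintype α]
    (k r : ℕ) (hk : 1 ≤ k) (hnull : nullity α = k)
    (hr : Nat.card {x : α // LatReducible x} = r) :
    2 ≤ r ∧ r ≤ 2 * k := by
  subst hnull hr
  refine ⟨?_, card_reducible_le_two_mul_nullity⟩
  by_cases htotal : ∀ x y : α, x ≤ y ∨ y ≤ x
  · exact absurd (nullity_eq_zero_of_total htotal) (by omega)
  push Not at htotal
  obtain ⟨x, y, hxy, hyx⟩ := htotal
  exact two_le_card_reducible_of_not_le_of_not_le hxy hyx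

/-- A dismantlable lattice of nullity `k ≥ 1` with exactly `r` reducible
elements satisfies `2 ≤ r ≤ 2k`. -/
theorem dismantlable_reducible_bounds (α : Type*) [Lattice α] [Fintype α]
    (k r : ℕ) (hk : 1 ≤ k) (hd : Dismantlable α) (hnull : nullity α = k)
    (hr : Nat.card {x : α // LatReducible x} = r) :
    2 ≤ r ∧ r ≤ 2 * k :=
  dismantlable_reducible_bounds_general α k r hk hnull hr
end

section
/- Let B be a finite lattice that is an adjunct of chains starting from a maximal chain, and let B* be its order dual. Then B* is also an adjunct of chains, B and B* have the same number of elements, the same number of reducible elements, and the same nullity; moreover B ↦ B* is a bijection (up to isomorphism) between the class of blocks with a given basic block and the class of blocks whose basic block is the dual basic block. -/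
open Finset

/-!
Duality reverses covering relations and chains without destroying them. Hence the cover
graphs of a poset and of its dual coincide, the subposet of `αᵒᵈ` on `S` is the dual of the
subposet of `α` on `S`, so every retract and pendant step transfers, and an adjunct
representation of `α` read in `αᵒᵈ` is again one, with the endpoints `a i` and `b i`
interchanged.
-/

open OrderDual

section Nullity
variable {α β : Type*} [PartialOrder α] [PartialOrder β]

lemma nullity_congr (e : coverGraph α ≃g coverGraph β) : nullity α = nullity β := by
  unfold nullity
  rw [Nat.card_congr e.mapEdgeSet, Nat.card_congr e.connectedComponentEquiv,
    Nat.card_congr e.toEquiv]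

def OrderIso.coverGraphIso (e : α ≃o β) : coverGraph α ≃g coverGraph β :=
  ⟨e.toEquiv, by simp only [coverGraph, OrderIso.coe_toEquiv, apply_covBy_apply_iff,
    implies_true]⟩

def coverGraphDualIso : coverGraph αᵒᵈ ≃g coverGraph α :=
  ⟨ofDual, fun {x y} => by
    change ofDual x ⋖ ofDual y ∨ ofDual y ⋖ ofDual x ↔ x ⋖ y ∨ y ⋖ x
    rw [ofDual_covBy_ofDual_iff, ofDual_covBy_ofDual_iff, or_comm]⟩

lemma OrderIso.nullity_eq (e : α ≃o β) : nullity α = nullity β :=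
  nullity_congr e.coverGraphIso

lemma nullity_orderDual : nullity αᵒᵈ = nullity α :=
  nullity_congr coverGraphDualIso

end Nullity

section DualPreimage
variable {α : Type*} [PartialOrder α]

def dualPreimageOrderIso (S : Set α) : ↥(ofDual ⁻¹' S) ≃o (↥S)ᵒᵈ where
  toFun p := toDual ⟨ofDual p.1, p.2⟩
  invFun q := ⟨toDual (ofDual q).1, (ofDual q).2⟩
  left_inv _ := rfl
  right_inv _ := rfl
  map_rel_iff' := Iff.rfl

lemma dualPreimage_covBy_iff {S : Set α} {p q : ↥(ofDual ⁻¹' S)} :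
    p ⋖ q ↔ ofDual (dualPreimageOrderIso S q) ⋖ ofDual (dualPreimageOrderIso S p) := by
  rw [ofDual_covBy_ofDual_iff, apply_covBy_apply_iff]

lemma nullity_dualPreimage (S : Set α) : nullity ↥(ofDual ⁻¹' S) = nullity ↥S :=
  (dualPreimageOrderIso S).nullity_eq.trans nullity_orderDual

lemma DoublyIrrOn.dual {S : Set α} {x : α} {hx : x ∈ S} (h : DoublyIrrOn S ⟨x, hx⟩) :
    DoublyIrrOn (ofDual ⁻¹' S) ⟨toDual x, hx⟩ :=
  have inj := (dualPreimageOrderIso S).injective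
  ⟨(h.2.preimage inj).anti fun _ hy => dualPreimage_covBy_iff.1 hy,
    (h.1.preimage inj).anti fun _ hy => dualPreimage_covBy_iff.1 hy⟩

lemma RetractStep.dual {S T : Set α} (h : RetractStep S T) :
    RetractStep (ofDual ⁻¹' S) (ofDual ⁻¹' T) := by
  obtain ⟨x, hx, rfl, hirr, hnullity⟩ := h
  exact ⟨toDual x, hx, rfl, hirr.dual,
    (nullity_dualPreimage _).trans (hnullity.trans (nullity_dualPreimage S).symm)⟩

lemma PendantStep.dual {S T : Set α} (h : PendantStep S T) :
    PendantStep (ofDual ⁻¹' S) (ofDual ⁻¹' T) := by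
  obtain ⟨x, hx, rfl, hcard⟩ := h
  refine ⟨toDual x, hx, rfl, ?_⟩
  set e := dualPreimageOrderIso S
  have hneighbours : {y | y ⋖ ⟨toDual x, hx⟩ ∨ ⟨toDual x, hx⟩ ⋖ y} =
      (fun p => ofDual (e p)) ⁻¹' {z : ↥S | z ⋖ ⟨x, hx⟩ ∨ ⟨x, hx⟩ ⋖ z} := by
    ext y
    simp only [Set.mem_ofPred_eq, Set.mem_preimage, dualPreimage_covBy_iff]
    exact or_comm
  rwa [hneighbours, Set.ncard_preimage_of_injective_subset_range (f := fun p => ofDual (e p))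
    e.injective fun z _ => e.surjective (toDual z)]

lemma IsBasicBlockAssoc.dual {B : Set α} (h : IsBasicBlockAssoc α B) :
    IsBasicBlockAssoc αᵒᵈ (ofDual ⁻¹' B) := by
  obtain ⟨R, ⟨hretract, hRfinal⟩, hpendant, hBfinal⟩ := h
  exact ⟨ofDual ⁻¹' R,
    ⟨hretract.lift _ fun _ _ => RetractStep.dual,
      fun T hT => hRfinal (toDual ⁻¹' T) hT.dual⟩,
    hpendant.lift _ fun _ _ => PendantStep.dual,
    fun T hT => hBfinal (toDual ⁻¹' T) hT.dual⟩

lemma isBasicBlockAssoc_dual_iff (B : Set α) :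
    IsBasicBlockAssoc αᵒᵈ (ofDual ⁻¹' B) ↔ IsBasicBlockAssoc α B :=
  ⟨IsBasicBlockAssoc.dual (α := αᵒᵈ), IsBasicBlockAssoc.dual⟩

end DualPreimage

section Lattice
variable {α : Type*} [Lattice α]

lemma latReducible_toDual_iff (x : α) : LatReducible (toDual x) ↔ LatReducible x :=
  or_comm

lemma IsAdjunctRep.dual {k : ℕ} {C : Fin (k + 1) → Set α} {a b : Fin (k + 1) → α}
    (h : IsAdjunctRep α k C a b) :
    IsAdjunctRep αᵒᵈ k (fun i => ofDual ⁻¹' C i) (fun i => toDual (b i))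
      (fun i => toDual (a i)) := by
  obtain ⟨hchain, hne, hunion, hdisj, hattach⟩ := h
  refine ⟨fun i => (hchain i).symm, hne, ?_, fun i j hij => (hdisj hij).preimage _,
    fun i hi => ?_⟩
  · rw [← Set.preimage_iUnion, hunion, Set.preimage_univ]
  · obtain ⟨hab, hncov, ha, hb, hconvex⟩ := hattach i hi
    exact ⟨toDual_lt_toDual.2 hab, fun h => hncov (toDual_covBy_toDual_iff.1 h), hb, ha,
      fun x hx y hy => (hconvex x hx y hy).symm⟩

end Lattice

theorem dual_adjunct_of_chains_general (α : Type*) [Lattice α] (k : ℕ)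
    (C : Fin (k + 1) → Set α) (a b : Fin (k + 1) → α)
    (hrep : IsAdjunctRep α k C a b) :
    (∃ k', IsAdjunctOfChains αᵒᵈ k') ∧
    Nat.card αᵒᵈ = Nat.card α ∧
    Nat.card {x : αᵒᵈ // LatReducible x} = Nat.card {x : α // LatReducible x} ∧
    nullity αᵒᵈ = nullity α ∧
    ∀ S : Set α, IsBasicBlockAssoc α S ↔
      IsBasicBlockAssoc αᵒᵈ (OrderDual.ofDual ⁻¹' S) :=
  ⟨⟨k, _, _, _, hrep.dual⟩, Nat.card_congr ofDual,
    Nat.card_congr (Equiv.subtypeEquiv ofDual fun x => latReducible_toDual_iff (ofDual x)),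
    nullity_orderDual, fun S => (isBasicBlockAssoc_dual_iff S).symm⟩

/-- dualization preserves being an adjunct of chains, the number of elements,
the number of reducible elements, and the nullity; and basic blocks dualize. -/
theorem dual_adjunct_of_chains (α : Type*) [Lattice α] [Fintype α] (k : ℕ)
    (C : Fin (k + 1) → Set α) (a b : Fin (k + 1) → α)
    (hrep : IsAdjunctRep α k C a b) (hmax : IsMaxChain (· ≤ ·) (C 0)) :
    (∃ k', IsAdjunctOfChains αᵒᵈ k') ∧
    Nat.card αᵒᵈ = Nat.card α ∧
    Nat.card {x : αᵒᵈ // LatReducible x} = Nat.card {x : α // LatReducible x} ∧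
    nullity αᵒᵈ = nullity α ∧
    ∀ S : Set α, IsBasicBlockAssoc α S ↔
      IsBasicBlockAssoc αᵒᵈ (OrderDual.ofDual ⁻¹' S) :=
  dual_adjunct_of_chains_general α k C a b hrep
end
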